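/- arXiv:0903.0216 — 2 statements merged into one kernel-verified Lean document; each statement's English description precedes it below -/
import Mathlib

section
/- Let p ≥ 2 and let u = a^{ε₀} t a^{ε₁} t ⋯ t a^{ε_q} be a word in BS(1,p) with |ε_i| < p for 0 ≤ i < q and |ε_q| < 3p. Then any geodesic representative v of u, when put in the normal form t⁻ᵈ a^{ψ₀} t ⋯ t a^{ψ_r} t⁻ˡ with ψ₀ ≠ 0 whenever d > 0 and |ψ_i| < p for i < r, must have d = 0; i.e. v has the form a^{η₀} t ⋯ t a^{η_q} or a^{η₀} t ⋯ t a^{η_q} t a^{ρ_{q+1}} t ⋯ t a^{ρ_{q+s}} t⁻ˢ with s > 0. -/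
/-- The single defining relation of `BS(1,p)`: `t a t⁻¹ a^{-p}`. -/
def BSrel (p : ℕ) : Set (FreeGroup Bool) :=
  {FreeGroup.of true * FreeGroup.of false * (FreeGroup.of true)⁻¹ * (FreeGroup.of false ^ p)⁻¹}

/-- The solvable Baumslag–Solitar group `BS(1,p) = ⟨a, t | t a t⁻¹ = aᵖ⟩`. -/
abbrev BS (p : ℕ) : Type := PresentedGroup (BSrel p)

/-- The generator `a` of `BS(1,p)`. -/
def gena (p : ℕ) : BS p := PresentedGroup.of false

/-- The generator `t` of `BS(1,p)`. -/
def gent (p : ℕ) : BS p := PresentedGroup.of true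

/-- A letter over the alphabet `{a, a⁻¹, t, t⁻¹}`: first component `false` = `a`,
`true` = `t`; second component is the sign (`true` = positive). -/
abbrev Letter : Type := Bool × Bool

/-- Value of a letter in `BS(1,p)`. -/
def letterVal (p : ℕ) : Letter → BS p
  | (g, s) => (if g then gent p else gena p) ^ (if s then (1 : ℤ) else -1)

/-- The element of `BS(1,p)` represented by a word. -/
def wordVal (p : ℕ) (w : List Letter) : BS p := (w.map (letterVal p)).prod

def tP : Letter := (true, true)
def tN : Letter := (true, false)
def aP : Letter := (false, true)
def aN : Letter := (false, false)

/-- `t`-exponent sum of a word. -/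
def texp (w : List Letter) : ℤ := (w.count tP : ℤ) - (w.count tN : ℤ)

/-- A word of type `P`: contains at least one `t` and no `t⁻¹`. -/
def TypeP (w : List Letter) : Prop := tP ∈ w ∧ tN ∉ w

/-- A word of type `N`: contains at least one `t⁻¹` and no `t`. -/
def TypeN (w : List Letter) : Prop := tN ∈ w ∧ tP ∉ w

/-- The word `a^x` (as a string of `|x|` letters). -/
def aWord (x : ℤ) : List Letter := List.replicate x.natAbs (false, decide (0 < x))

/-- The word `a^{ε₀} t a^{ε₁} t ⋯ t a^{ε_q}`. -/
def stackWord (ε : ℕ → ℤ) (q : ℕ) : List Letter :=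
  ((List.range q).map (fun i => aWord (ε i) ++ [tP])).flatten ++ aWord (ε q)

/-- The word `t⁻ᵏ a^{ε₀} t ⋯ t a^{ε_q} t⁻ᵐ`. -/
def canonWord (k : ℕ) (ε : ℕ → ℤ) (q m : ℕ) : List Letter :=
  List.replicate k tN ++ stackWord ε q ++ List.replicate m tN

/-- `ℤ[1/p]` as an additive subgroup of `ℚ`. -/
def Zp (p : ℕ) : AddSubgroup ℚ := AddSubgroup.closure {x : ℚ | ∃ n : ℕ, x = ((p : ℚ))⁻¹ ^ n}


/-!
Let `BS(1,p)` act on `ℚ` by `a : x ↦ 1 + x` and `t : x ↦ p x`. The word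
`t⁻ᵈ a^{ψ₀} t ⋯ t a^{ψ_r} t⁻ˡ` acts as `x ↦ p^{r-d-l} x + (∑ ψᵢ pⁱ) / pᵈ`, and
`a^{ε₀} t ⋯ t a^{ε_q}` as `x ↦ p^q x + ∑ εᵢ pⁱ`. Comparing the two maps at `0` and `1` gives
`r = q + d + l` and `∑ ψᵢ pⁱ = pᵈ ∑ εᵢ pⁱ`. If `d > 0`, then `r ≥ 1` and `p ∣ ψ₀`,
which is impossible for `0 < |ψ₀| < p`.
-/

open Finset

lemma Equiv.addLeft_zpow_apply {G : Type*} [AddGroup G] (a : G) (n : ℤ) (x : G) :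
    (Equiv.addLeft a ^ n) x = n • a + x := by
  induction n using Int.induction_on generalizing x with
  | zero => simp
  | succ n ih => rw [zpow_add_one, Equiv.Perm.mul_apply, ih, add_zsmul, one_zsmul, add_assoc]; rfl
  | pred n ih => rw [zpow_sub_one, Equiv.Perm.mul_apply, ih, sub_zsmul, one_zsmul, add_assoc]; rfl

lemma Equiv.mulLeft₀_zpow_apply {G₀ : Type*} [GroupWithZero G₀] (c : G₀) (hc : c ≠ 0) (n : ℤ)
    (x : G₀) : (Equiv.mulLeft₀ c hc ^ n) x = c ^ n * x := by
  induction n using Int.induction_on generalizing x with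
  | zero => simp
  | succ n ih => rw [zpow_add_one, Equiv.Perm.mul_apply, ih, zpow_add_one₀ hc, mul_assoc]; rfl
  | pred n ih => rw [zpow_sub_one, Equiv.Perm.mul_apply, ih, zpow_sub_one₀ hc, mul_assoc]; simp

lemma dvd_sum_range_succ_mul_pow_iff {R : Type*} [CommRing R] (a : R) (f : ℕ → R) (n : ℕ) :
    a ∣ ∑ i ∈ range (n + 1), f i * a ^ i ↔ a ∣ f 0 := by
  rw [sum_range_succ', pow_zero, mul_one]
  exact dvd_add_right (dvd_sum fun i _ => dvd_mul_of_dvd_right (dvd_pow_self a i.succ_ne_zero) _)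

namespace BS

variable {p : ℕ}

lemma wordVal_append (w₁ w₂ : List Letter) :
    wordVal p (w₁ ++ w₂) = wordVal p w₁ * wordVal p w₂ := by
  simp [wordVal]

lemma wordVal_aWord (x : ℤ) : wordVal p (aWord x) = gena p ^ x := by
  rw [wordVal, aWord, List.map_replicate, List.prod_replicate]
  rcases lt_or_ge 0 x with hx | hx
  · rw [show letterVal p (false, decide (0 < x)) = gena p by simp [letterVal, hx],
      ← zpow_natCast, Int.natAbs_of_nonneg hx.le]
  · rw [show letterVal p (false, decide (0 < x)) = (gena p)⁻¹ by simp [letterVal, not_lt.2 hx],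
      inv_pow, ← zpow_natCast, ← zpow_neg, Int.ofNat_natAbs_of_nonpos hx, neg_neg]

lemma wordVal_replicate_tN (k : ℕ) : wordVal p (List.replicate k tN) = gent p ^ (-(k : ℤ)) := by
  rw [wordVal, List.map_replicate, List.prod_replicate,
    show letterVal p tN = (gent p)⁻¹ by simp [letterVal, tN], inv_pow, ← zpow_natCast, zpow_neg]

lemma wordVal_tP : wordVal p [tP] = gent p := by
  simp [wordVal, letterVal, tP]

lemma stackWord_zero (ε : ℕ → ℤ) : stackWord ε 0 = aWord (ε 0) := by
  simp [stackWord]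

lemma stackWord_succ (ε : ℕ → ℤ) (q : ℕ) :
    stackWord ε (q + 1) = stackWord ε q ++ [tP] ++ aWord (ε (q + 1)) := by
  simp [stackWord, List.range_succ]

lemma canonWord_zero_zero (ε : ℕ → ℤ) (q : ℕ) : canonWord 0 ε q 0 = stackWord ε q := by
  simp [canonWord]

section affineAction

def affineAction (hp : p ≠ 0) : BS p →* Equiv.Perm ℚ :=
  PresentedGroup.toGroup
    (f := fun g => if g then Equiv.mulLeft₀ (p : ℚ) (Nat.cast_ne_zero.2 hp) else Equiv.addLeft 1)
    (by
      rintro r rfl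
      ext x
      simp [field])

variable (hp : p ≠ 0)

lemma affineAction_gena_zpow_apply (n : ℤ) (x : ℚ) :
    affineAction hp (gena p ^ n) x = n + x := by
  rw [map_zpow, gena, affineAction, PresentedGroup.toGroup.of, if_neg Bool.false_ne_true,
    Equiv.addLeft_zpow_apply, zsmul_one]

lemma affineAction_gent_zpow_apply (n : ℤ) (x : ℚ) :
    affineAction hp (gent p ^ n) x = (p : ℚ) ^ n * x := by
  rw [map_zpow, gent, affineAction, PresentedGroup.toGroup.of, if_pos rfl,
    Equiv.mulLeft₀_zpow_apply]

lemma affineAction_stackWord_apply (ε : ℕ → ℤ) (q : ℕ) (x : ℚ) :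
    affineAction hp (wordVal p (stackWord ε q)) x =
      ∑ i ∈ range (q + 1), (ε i : ℚ) * (p : ℚ) ^ i + (p : ℚ) ^ q * x := by
  induction q generalizing x with
  | zero => rw [stackWord_zero, wordVal_aWord, affineAction_gena_zpow_apply]; simp
  | succ q ih =>
    rw [stackWord_succ, wordVal_append, wordVal_append, wordVal_tP, wordVal_aWord,
      map_mul, map_mul, Equiv.Perm.mul_apply, Equiv.Perm.mul_apply,
      affineAction_gena_zpow_apply, ← zpow_one (gent p), affineAction_gent_zpow_apply, zpow_one,
      ih, sum_range_succ _ (q + 1)]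
    ring

lemma affineAction_canonWord_apply (k : ℕ) (ε : ℕ → ℤ) (q m : ℕ) (x : ℚ) :
    affineAction hp (wordVal p (canonWord k ε q m)) x =
      (∑ i ∈ range (q + 1), (ε i : ℚ) * (p : ℚ) ^ i + (p : ℚ) ^ q * x / (p : ℚ) ^ m) /
        (p : ℚ) ^ k := by
  rw [canonWord, wordVal_append, wordVal_append, wordVal_replicate_tN, wordVal_replicate_tN,
    map_mul, map_mul, Equiv.Perm.mul_apply, Equiv.Perm.mul_apply, affineAction_gent_zpow_apply,
    affineAction_gent_zpow_apply, affineAction_stackWord_apply]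
  simp only [zpow_neg, zpow_natCast]
  ring

end affineAction

lemma eq_of_wordVal_canonWord_eq (hp : 2 ≤ p) {k r m q : ℕ} {ψ ε : ℕ → ℤ}
    (h : wordVal p (canonWord k ψ r m) = wordVal p (stackWord ε q)) :
    r = q + k + m ∧ ∑ i ∈ range (r + 1), ψ i * (p : ℤ) ^ i =
      (p : ℤ) ^ k * ∑ i ∈ range (q + 1), ε i * (p : ℤ) ^ i := by
  have hp0 : p ≠ 0 := by omega
  have hpQ : (p : ℚ) ≠ 0 := Nat.cast_ne_zero.2 hp0
  have hx (x : ℚ) := congrArg (fun g => affineAction hp0 g x) h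
  simp only [affineAction_canonWord_apply, affineAction_stackWord_apply] at hx
  have hsum := hx 0
  have hscale := hx 1
  simp only [mul_zero, zero_div, add_zero, div_eq_iff (pow_ne_zero _ hpQ)] at hsum
  rw [hsum] at hscale
  field_simp at hscale
  refine ⟨Nat.pow_right_injective hp ?_, ?_⟩
  · have hpow : (p : ℚ) ^ r = (p : ℚ) ^ (q + k + m) := by
      rw [pow_add, pow_add]
      linear_combination hscale
    exact_mod_cast hpow
  · rw [mul_comm]
    exact_mod_cast hsum

end BS

theorem stmt10_general (p : ℕ) (hp : 2 ≤ p) (ε : ℕ → ℤ) (q : ℕ)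
    (d r l : ℕ) (ψ : ℕ → ℤ) (hψ0 : 0 < d → ψ 0 ≠ 0) (hψ : ∀ i < r, (ψ i).natAbs < p)
    (heq : wordVal p (canonWord d ψ r l) = wordVal p (canonWord 0 ε q 0)) :
    d = 0 := by
  by_contra hd
  rw [BS.canonWord_zero_zero] at heq
  obtain ⟨hr, hsum⟩ := BS.eq_of_wordVal_canonWord_eq hp heq
  have hdvd : (p : ℤ) ∣ ψ 0 := by
    rw [← dvd_sum_range_succ_mul_pow_iff, hsum]
    exact dvd_mul_of_dvd_left (dvd_pow_self _ hd) _
  exact hψ0 (Nat.pos_of_ne_zero hd)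
    (Int.eq_zero_of_dvd_of_natAbs_lt_natAbs hdvd (hψ 0 (by omega)))

/-- a geodesic representative `t⁻ᵈ a^{ψ₀} t ⋯ t a^{ψ_r} t⁻ˡ`
(with `ψ₀ ≠ 0` whenever `d > 0` and `|ψ_i| < p` for `i < r`) of a word
`a^{ε₀} t ⋯ t a^{ε_q}` (with `|ε_i| < p` for `i < q`, `|ε_q| < 3p`) has `d = 0`. -/
theorem stmt10 (p : ℕ) (hp : 2 ≤ p) (ε : ℕ → ℤ) (q : ℕ)
    (hε : ∀ i < q, (ε i).natAbs < p) (hεq : (ε q).natAbs < 3 * p)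
    (d r l : ℕ) (ψ : ℕ → ℤ) (hψ0 : 0 < d → ψ 0 ≠ 0) (hψ : ∀ i < r, (ψ i).natAbs < p)
    (heq : wordVal p (canonWord d ψ r l) = wordVal p (canonWord 0 ε q 0))
    (hgeo : ∀ w' : List Letter, wordVal p w' = wordVal p (canonWord d ψ r l) →
      (canonWord d ψ r l).length ≤ w'.length) :
    d = 0 :=
  stmt10_general p hp ε q d r l ψ hψ0 hψ heq
end

section
/- In BS(1,p) with p ≥ 2, if a word w of type PN (a P-block followed by an N-block) has t-exponent sum zero, then w represents an element of the subgroup ⟨a⟩, i.e. w =_G aᵐ for some integer m. -/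
/-!
Pushing every `t` of a word without `t⁻¹` to the right via `t aˣ = a^{px} t` brings it to the
form `aˣ tᵏ`; pushing every `t⁻¹` of a word without `t` to the left via `aˣ t⁻ᵏ = t⁻ᵏ a^{pᵏx}`
brings it to the form `t⁻ᵏ aʸ`, with `x, y` integers because `t` is only ever conjugated past
`a`, never `t⁻¹`. For a `PN` word of zero `t`-exponent both exponents `k` agree, so the word
equals `aˣ tᵏ t⁻ᵏ aʸ = a^{x+y}`.
-/

theorem conj_pow_zpow_eq_zpow_of_conj_eq {G : Type*} [Group G] {a t : G} {n : ℤ}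
    (h : t * a * t⁻¹ = a ^ n) (k : ℕ) (x : ℤ) :
    t ^ k * a ^ x * (t ^ k)⁻¹ = a ^ (n ^ k * x) := by
  induction k with
  | zero => simp
  | succ k ih =>
    calc t ^ (k + 1) * a ^ x * (t ^ (k + 1))⁻¹ = t * (t ^ k * a ^ x * (t ^ k)⁻¹) * t⁻¹ := by
          group
      _ = a ^ (n ^ (k + 1) * x) := by rw [ih, ← conj_zpow, h, ← zpow_mul, pow_succ']; ring_nf

section Words

variable {p : ℕ}

theorem gent_mul_gena_mul_gent_inv : gent p * gena p * (gent p)⁻¹ = gena p ^ (p : ℤ) := by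
  rw [zpow_natCast, ← mul_inv_eq_one]
  exact PresentedGroup.one_of_mem rfl

theorem gent_pow_mul_gena_zpow_mul_inv (k : ℕ) (x : ℤ) :
    gent p ^ k * gena p ^ x * (gent p ^ k)⁻¹ = gena p ^ ((p : ℤ) ^ k * x) :=
  conj_pow_zpow_eq_zpow_of_conj_eq gent_mul_gena_mul_gent_inv k x

@[simp]
theorem wordVal_nil : wordVal p [] = 1 := rfl

@[simp]
theorem wordVal_cons (l : Letter) (w : List Letter) :
    wordVal p (l :: w) = letterVal p l * wordVal p w := by
  simp [wordVal]

theorem wordVal_append (u v : List Letter) : wordVal p (u ++ v) = wordVal p u * wordVal p v := by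
  simp [wordVal]

theorem letterVal_false (s : Bool) :
    letterVal p (false, s) = gena p ^ (if s then (1 : ℤ) else -1) := rfl

theorem letterVal_tP : letterVal p tP = gent p := zpow_one _

theorem letterVal_tN : letterVal p tN = (gent p)⁻¹ := zpow_neg_one _

theorem exists_wordVal_eq_zpow_mul_pow_of_tN_not_mem {w : List Letter} (hw : tN ∉ w) :
    ∃ x : ℤ, wordVal p w = gena p ^ x * gent p ^ w.count tP := by
  induction w with
  | nil => exact ⟨0, by simp⟩
  | cons l w ih =>
    obtain ⟨x, hx⟩ := ih fun h => hw (.tail _ h)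
    rw [wordVal_cons, hx]
    rcases l with ⟨_ | _, s⟩
    · refine ⟨(if s then 1 else -1) + x, ?_⟩
      simp only [letterVal_false, List.count_cons_of_ne (by simp [tP] : ((false, s) : Letter) ≠ tP),
        zpow_add, mul_assoc]
    · cases s
      · exact absurd List.mem_cons_self hw
      · refine ⟨p * x, ?_⟩
        change letterVal p tP * _ = _ * gent p ^ List.count tP (tP :: w)
        rw [letterVal_tP, List.count_cons_self, pow_succ', zpow_mul, ← zpow_natCast,
          ← gent_mul_gena_mul_gent_inv, conj_zpow]
        group

theorem exists_wordVal_eq_inv_pow_mul_zpow_of_tP_not_mem {w : List Letter} (hw : tP ∉ w) :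
    ∃ y : ℤ, wordVal p w = (gent p ^ w.count tN)⁻¹ * gena p ^ y := by
  induction w with
  | nil => exact ⟨0, by simp⟩
  | cons l w ih =>
    obtain ⟨y, hy⟩ := ih fun h => hw (.tail _ h)
    rw [wordVal_cons, hy]
    rcases l with ⟨_ | _, s⟩
    · refine ⟨(p : ℤ) ^ w.count tN * (if s then 1 else -1) + y, ?_⟩
      rw [List.count_cons_of_ne (by simp [tN]), letterVal_false, zpow_add,
        ← gent_pow_mul_gena_zpow_mul_inv]
      group
    · cases s
      · refine ⟨y, ?_⟩
        change letterVal p tN * _ = (gent p ^ List.count tN (tN :: w))⁻¹ * _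
        rw [letterVal_tN, List.count_cons_self, pow_succ']
        group
      · exact absurd List.mem_cons_self hw

end Words

theorem stmt16_general (p : ℕ) (w wP wN : List Letter)
    (hw : w = wP ++ wN) (h1 : TypeP wP) (h2 : TypeN wN) (h0 : texp w = 0) :
    ∃ m : ℤ, wordVal p w = gena p ^ m := by
  obtain ⟨x, hx⟩ := exists_wordVal_eq_zpow_mul_pow_of_tN_not_mem (p := p) h1.2
  obtain ⟨y, hy⟩ := exists_wordVal_eq_inv_pow_mul_zpow_of_tP_not_mem (p := p) h2.2
  have hcount : wP.count tP = wN.count tN := by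
    simp only [texp, hw, List.count_append, List.count_eq_zero_of_not_mem h1.2,
      List.count_eq_zero_of_not_mem h2.2] at h0
    omega
  exact ⟨x + y, by rw [hw, wordVal_append, hx, hy, hcount, zpow_add]; group⟩

/-- a word of type `PN` with zero `t`-exponent sum represents an element
of the subgroup `⟨a⟩`, i.e. equals `aᵐ` for some integer `m`. -/
theorem stmt16 (p : ℕ) (hp : 2 ≤ p) (w wP wN : List Letter)
    (hw : w = wP ++ wN) (h1 : TypeP wP) (h2 : TypeN wN) (h0 : texp w = 0) :
    ∃ m : ℤ, wordVal p w = gena p ^ m :=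
  stmt16_general p w wP wN hw h1 h2 h0
end
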